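/- A non-trivial level equation in canonical form has no unifier if and only if it (or its symmetric) has the form n ≐ l where n is a constant and n is strictly less than the constant coefficient of l. -/

import Mathlib

/-- Universe level expressions: `l ::= i | 0 | S l | l ⊔ l'`. -/
inductive Lvl : Type
  | var : ℕ → Lvl
  | zero : Lvl
  | succ : Lvl → Lvl
  | max : Lvl → Lvl → Lvl
  deriving DecidableEq

namespace Lvl

/-- Interpretation of a level under an assignment `φ` of naturals to variables. -/
def eval (φ : ℕ → ℕ) : Lvl → ℕ
  | .var i => φ i
  | .zero => 0
  | .succ l => l.eval φ + 1
  | .max a b => Nat.max (a.eval φ) (b.eval φ)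

/-- Semantic equivalence: equal value under every assignment. -/
def Equiv (l l' : Lvl) : Prop := ∀ φ : ℕ → ℕ, l.eval φ = l'.eval φ

/-- Application of a level substitution. -/
def subst (θ : ℕ → Lvl) : Lvl → Lvl
  | .var i => θ i
  | .zero => .zero
  | .succ l => .succ (l.subst θ)
  | .max a b => .max (a.subst θ) (b.subst θ)

/-- Free variables of a level. -/
def fv : Lvl → Finset ℕ
  | .var i => {i}
  | .zero => ∅
  | .succ l => l.fv
  | .max a b => a.fv ∪ b.fv

/-- The constant level `n`, i.e. `Sⁿ 0`. -/
def const (n : ℕ) : Lvl := Lvl.succ^[n] Lvl.zero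

/-- The level `n + i`, i.e. `Sⁿ i`. -/
def atom (n i : ℕ) : Lvl := Lvl.succ^[n] (Lvl.var i)

end Lvl

/-- `θ` is a unifier of the equation `l₁ ≐ l₂`. -/
def Unifies (θ : ℕ → Lvl) (l₁ l₂ : Lvl) : Prop := Lvl.Equiv (l₁.subst θ) (l₂.subst θ)

/-- `θ` is a most general unifier of the equation `l₁ ≐ l₂`. -/
def IsMGU (θ : ℕ → Lvl) (l₁ l₂ : Lvl) : Prop :=
  Unifies θ l₁ l₂ ∧ ∀ τ, Unifies τ l₁ l₂ →
    ∃ θ' : ℕ → Lvl, ∀ i ∈ l₁.fv ∪ l₂.fv, Lvl.Equiv ((θ i).subst θ') (τ i)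

/-- The level `p ⊔ (n₁ + i₁) ⊔ ... ⊔ (n_m + i_m)` given by canonical-form data. -/
def buildCanon (p : ℕ) (L : List (ℕ × ℕ)) : Lvl :=
  L.foldr (fun a acc => Lvl.max (Lvl.atom a.1 a.2) acc) (Lvl.const p)

/-- The equation `buildCanon p₁ L₁ ≐ buildCanon p₂ L₂` is in canonical form:
both sides canonical (coefficients bounded by the constant coefficient, variables
pairwise distinct), shared variables have equal coefficients on both sides, and
some coefficient on some side equals `0`. -/
def CanonEqn (p₁ : ℕ) (L₁ : List (ℕ × ℕ)) (p₂ : ℕ) (L₂ : List (ℕ × ℕ)) : Prop :=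
  (∀ a ∈ L₁, a.1 ≤ p₁) ∧ (L₁.map Prod.snd).Nodup ∧
  (∀ a ∈ L₂, a.1 ≤ p₂) ∧ (L₂.map Prod.snd).Nodup ∧
  (∀ a ∈ L₁, ∀ b ∈ L₂, a.2 = b.2 → a.1 = b.1) ∧
  0 ∈ (p₁ :: p₂ :: (L₁ ++ L₂).map Prod.fst)


/-!
An equation `p₁ ⊔ ⨆ (n + i) ≐ p₂ ⊔ ⨆ (n' + j)` in canonical form is unified by sending every
variable `i` with coefficient `c i` to the constant `M - c i`, where `M = max p₁ p₂`: every
atom `n + i` then evaluates to `M`, and since coefficients are bounded by the constant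
coefficient, each side evaluates to `M` as soon as it has an atom or its constant is `M`. This
fails only when a side without variables has the smaller constant, and then no unifier exists,
because a substitution never lowers the other side below its constant coefficient.
-/

namespace Lvl

@[simp]
lemma eval_iterate_succ (φ : ℕ → ℕ) (n : ℕ) (l : Lvl) :
    (Lvl.succ^[n] l).eval φ = l.eval φ + n := by
  induction n with
  | zero => rfl
  | succ n ih => rw [Function.iterate_succ_apply', eval, ih, Nat.add_assoc]

@[simp]
lemma eval_const (φ : ℕ → ℕ) (n : ℕ) : (const n).eval φ = n := by
  simp [const, eval]

@[simp]
lemma eval_atom (φ : ℕ → ℕ) (n i : ℕ) : (atom n i).eval φ = φ i + n := by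
  simp [atom, eval]

lemma eval_subst (θ : ℕ → Lvl) (φ : ℕ → ℕ) (l : Lvl) :
    (l.subst θ).eval φ = l.eval (fun i => (θ i).eval φ) := by
  induction l with
  | var i => rfl
  | zero => rfl
  | succ l ih => simp only [subst, eval, ih]
  | max a b iha ihb => simp only [subst, eval, iha, ihb]

end Lvl

lemma Unifies.symm {θ : ℕ → Lvl} {l₁ l₂ : Lvl} (h : Unifies θ l₁ l₂) : Unifies θ l₂ l₁ :=
  fun φ => (h φ).symm

section buildCanon

variable (ψ : ℕ → ℕ) (p : ℕ)

@[simp]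
lemma eval_buildCanon_nil : (buildCanon p []).eval ψ = p :=
  Lvl.eval_const ψ p

@[simp]
lemma eval_buildCanon_cons (a : ℕ × ℕ) (L : List (ℕ × ℕ)) :
    (buildCanon p (a :: L)).eval ψ = max (ψ a.2 + a.1) ((buildCanon p L).eval ψ) := by
  simp [buildCanon, Lvl.eval]

lemma le_eval_buildCanon (L : List (ℕ × ℕ)) : p ≤ (buildCanon p L).eval ψ := by
  induction L with
  | nil => simp
  | cons a L ih => exact (eval_buildCanon_cons ψ p a L).symm ▸ le_max_of_le_right ih

lemma le_eval_buildCanon_of_mem {L : List (ℕ × ℕ)} {a : ℕ × ℕ} (ha : a ∈ L) :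
    ψ a.2 + a.1 ≤ (buildCanon p L).eval ψ := by
  induction L with
  | nil => simp at ha
  | cons b L ih =>
    rw [eval_buildCanon_cons]
    rcases List.mem_cons.mp ha with rfl | ha
    · exact le_max_left _ _
    · exact le_max_of_le_right (ih ha)

variable {ψ p}

lemma eval_buildCanon_le {L : List (ℕ × ℕ)} {M : ℕ} (hp : p ≤ M)
    (hL : ∀ a ∈ L, ψ a.2 + a.1 ≤ M) : (buildCanon p L).eval ψ ≤ M := by
  induction L with
  | nil => simpa
  | cons a L ih =>
    rw [eval_buildCanon_cons]
    exact max_le (hL a List.mem_cons_self) (ih fun b hb => hL b (List.mem_cons_of_mem a hb))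

lemma eval_buildCanon_eq_of_ne_nil {L : List (ℕ × ℕ)} (hL : L ≠ []) {M : ℕ} (hp : p ≤ M)
    (hM : ∀ a ∈ L, ψ a.2 + a.1 = M) : (buildCanon p L).eval ψ = M := by
  obtain ⟨a, ha⟩ := List.exists_mem_of_ne_nil L hL
  refine le_antisymm (eval_buildCanon_le hp fun b hb => (hM b hb).le) ?_
  exact hM a ha ▸ le_eval_buildCanon_of_mem ψ p ha

end buildCanon

lemma not_unifies_buildCanon_nil_of_lt {p q : ℕ} (hpq : p < q) (L : List (ℕ × ℕ))
    (θ : ℕ → Lvl) : ¬ Unifies θ (buildCanon p []) (buildCanon q L) := by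
  intro hθ
  have h := hθ fun _ => 0
  rw [Lvl.eval_subst, Lvl.eval_subst, eval_buildCanon_nil] at h
  exact hpq.not_ge (h ▸ le_eval_buildCanon _ q L)

lemma List.exists_fun_eq_fst_of_snd_eq {α β : Type*} [Nonempty α] {L : List (α × β)}
    (hL : ∀ a ∈ L, ∀ b ∈ L, a.2 = b.2 → a.1 = b.1) :
    ∃ c : β → α, ∀ a ∈ L, c a.2 = a.1 := by
  classical
  refine ⟨fun j => if h : ∃ a ∈ L, a.2 = j then h.choose.1 else Classical.arbitrary α,
    fun a ha => ?_⟩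
  have h : ∃ b ∈ L, b.2 = a.2 := ⟨a, ha, rfl⟩
  dsimp only
  rw [dif_pos h]
  exact hL _ h.choose_spec.1 a ha h.choose_spec.2

lemma CanonEqn.exists_coeff {p₁ p₂ : ℕ} {L₁ L₂ : List (ℕ × ℕ)} (h : CanonEqn p₁ L₁ p₂ L₂) :
    ∃ c : ℕ → ℕ, ∀ a ∈ L₁ ++ L₂, c a.2 = a.1 := by
  obtain ⟨-, hnodup₁, -, hnodup₂, hshared, -⟩ := h
  refine List.exists_fun_eq_fst_of_snd_eq fun a ha b hb hab => ?_
  rcases List.mem_append.mp ha with ha | ha <;> rcases List.mem_append.mp hb with hb | hb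
  · rw [List.inj_on_of_nodup_map hnodup₁ ha hb hab]
  · exact hshared a ha b hb hab
  · exact (hshared b hb a ha hab.symm).symm
  · rw [List.inj_on_of_nodup_map hnodup₂ ha hb hab]

lemma eval_buildCanon_sub_coeff {c : ℕ → ℕ} {p M : ℕ} {L : List (ℕ × ℕ)}
    (hc : ∀ a ∈ L, c a.2 = a.1) (hL : ∀ a ∈ L, a.1 ≤ p) (hp : p ≤ M) (hnil : L = [] → p = M) :
    (buildCanon p L).eval (fun i => M - c i) = M := by
  rcases eq_or_ne L [] with rfl | hne
  · simpa using hnil rfl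
  · refine eval_buildCanon_eq_of_ne_nil hne hp fun a ha => ?_
    have := hL a ha
    rw [hc a ha]
    omega

lemma CanonEqn.exists_unifies {p₁ p₂ : ℕ} {L₁ L₂ : List (ℕ × ℕ)} (h : CanonEqn p₁ L₁ p₂ L₂)
    (h₁ : L₁ = [] → p₂ ≤ p₁) (h₂ : L₂ = [] → p₁ ≤ p₂) :
    ∃ θ, Unifies θ (buildCanon p₁ L₁) (buildCanon p₂ L₂) := by
  obtain ⟨c, hc⟩ := h.exists_coeff
  refine ⟨fun i => Lvl.const (max p₁ p₂ - c i), fun φ => ?_⟩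
  simp only [Lvl.eval_subst, Lvl.eval_const]
  rw [eval_buildCanon_sub_coeff (fun a ha => hc a (List.mem_append_left _ ha)) h.1
      (le_max_left _ _) fun hL => (max_eq_left (h₁ hL)).symm,
    eval_buildCanon_sub_coeff (fun a ha => hc a (List.mem_append_right _ ha)) h.2.2.1
      (le_max_right _ _) fun hL => (max_eq_right (h₂ hL)).symm]

theorem no_unifier_characterization_general (p₁ p₂ : ℕ) (L₁ L₂ : List (ℕ × ℕ))
    (hcanon : CanonEqn p₁ L₁ p₂ L₂) :
    (¬ ∃ θ, Unifies θ (buildCanon p₁ L₁) (buildCanon p₂ L₂)) ↔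
      ((L₁ = [] ∧ p₁ < p₂) ∨ (L₂ = [] ∧ p₂ < p₁)) := by
  constructor
  · intro hno
    by_contra! hshape
    exact hno (hcanon.exists_unifies hshape.1 hshape.2)
  · rintro (⟨rfl, hp⟩ | ⟨rfl, hp⟩) ⟨θ, hθ⟩
    · exact not_unifies_buildCanon_nil_of_lt hp L₂ θ hθ
    · exact not_unifies_buildCanon_nil_of_lt hp L₁ θ hθ.symm

/-- A non-trivial level equation in canonical form has no unifier iff it (or its
symmetric) has the form `n ≐ l` where `n` is a constant (no variables on that
side) strictly smaller than the constant coefficient of `l`. -/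
theorem no_unifier_characterization (p₁ p₂ : ℕ) (L₁ L₂ : List (ℕ × ℕ))
    (hcanon : CanonEqn p₁ L₁ p₂ L₂)
    (hnontriv : ¬ Lvl.Equiv (buildCanon p₁ L₁) (buildCanon p₂ L₂)) :
    (¬ ∃ θ, Unifies θ (buildCanon p₁ L₁) (buildCanon p₂ L₂)) ↔
      ((L₁ = [] ∧ p₁ < p₂) ∨ (L₂ = [] ∧ p₂ < p₁)) :=
  no_unifier_characterization_general p₁ p₂ L₁ L₂ hcanon
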